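/- arXiv:2106.14826 — 4 statements merged into one kernel-verified Lean document; each statement's English description precedes it below -/
import Mathlib

section
/- Let H be a group generated by a finite set S, with word metric d. If h ∈ H is a Morse element (its orbit map t ↦ h^t is a quasi-isometric embedding of ℤ into the Cayley graph such that every (Λ,K)-quasi-geodesic between points h^i, h^j stays within a constant M^{(Λ,K)} of the cyclic subgroup ⟨h⟩), then the cyclic subgroup ⟨h⟩ has finite index in the centralizer Z(h) of h in H. -/
/-!
Replace `z ∈ Z(h)` by a shortest element of its coset `z⟨h⟩`, of word length `D`. Since `z`
commutes with `h`, every point `z * h ^ t` is then at distance at least `D` from `⟨h⟩`. For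
`n ≥ 2 A D`, the path that leaves `h ^ (-n)` along a geodesic to `z * h ^ (-n)`, follows
`z * h ^ t` for `|t| ≤ n`, and returns along a translated geodesic to `h ^ n` is a
`(3 A + B, B)`-quasi-geodesic, with constants independent of `z`. The Morse property puts its
midpoint `z` within `M` of `⟨h⟩`, so `D ≤ M`: every coset of `⟨h⟩` in `Z(h)` meets the finite
ball of radius `M`.
-/

/-- the word metric on `H` with respect to a generating set `T`. -/
noncomputable def wordDist {H : Type*} [Group H] (T : Set H) (g h : H) : ℕ :=
  sInf {n : ℕ | ∃ l : List H, l.length = n ∧ (∀ a ∈ l, a ∈ T ∨ a⁻¹ ∈ T) ∧ g * l.prod = h}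

section WordMetric

variable {H : Type*} [Group H] {T : Set H}

theorem wordDist_le_length {g k : H} (l : List H) (hl : ∀ a ∈ l, a ∈ T ∨ a⁻¹ ∈ T)
    (hp : g * l.prod = k) : wordDist T g k ≤ l.length :=
  Nat.sInf_le ⟨l, rfl, hl, hp⟩

theorem exists_list_length_eq_wordDist (hgen : Subgroup.closure T = ⊤) (g k : H) :
    ∃ l : List H, l.length = wordDist T g k ∧ (∀ a ∈ l, a ∈ T ∨ a⁻¹ ∈ T) ∧ g * l.prod = k := by
  have hmem : g⁻¹ * k ∈ Submonoid.closure (T ∪ T⁻¹) := by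
    rw [← Subgroup.closure_toSubmonoid, hgen]
    trivial
  obtain ⟨l, hl, hp⟩ := Submonoid.exists_list_of_mem_closure hmem
  exact Nat.sInf_mem (s := {n | ∃ l : List H, l.length = n ∧ (∀ a ∈ l, a ∈ T ∨ a⁻¹ ∈ T) ∧
    g * l.prod = k}) ⟨l.length, l, rfl, hl, by rw [hp, mul_inv_cancel_left]⟩

theorem wordDist_self (g : H) : wordDist T g g = 0 :=
  Nat.le_zero.mp (wordDist_le_length [] (by simp) (by simp))

theorem wordDist_mul_left (x g k : H) : wordDist T (x * g) (x * k) = wordDist T g k := by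
  simp only [wordDist, mul_assoc, mul_right_inj]

theorem wordDist_eq_wordDist_one (g k : H) : wordDist T g k = wordDist T 1 (g⁻¹ * k) := by
  rw [← wordDist_mul_left g⁻¹, inv_mul_cancel]

theorem wordDist_comm (g k : H) : wordDist T g k = wordDist T k g := by
  have reverse : ∀ g k : H,
      {n | ∃ l : List H, l.length = n ∧ (∀ a ∈ l, a ∈ T ∨ a⁻¹ ∈ T) ∧ g * l.prod = k} ⊆
      {n | ∃ l : List H, l.length = n ∧ (∀ a ∈ l, a ∈ T ∨ a⁻¹ ∈ T) ∧ k * l.prod = g} := by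
    rintro g k _ ⟨l, rfl, hl, rfl⟩
    refine ⟨(l.map (·⁻¹)).reverse, by simp, ?_, by rw [← List.prod_inv_reverse]; group⟩
    simp only [List.mem_reverse, List.mem_map]
    rintro _ ⟨a, ha, rfl⟩
    simpa [or_comm] using hl a ha
  exact congrArg sInf ((reverse g k).antisymm (reverse k g))

theorem wordDist_triangle (hgen : Subgroup.closure T = ⊤) (g m k : H) :
    wordDist T g k ≤ wordDist T g m + wordDist T m k := by
  obtain ⟨l₁, hl₁, hT₁, hp₁⟩ := exists_list_length_eq_wordDist hgen g m
  obtain ⟨l₂, hl₂, hT₂, hp₂⟩ := exists_list_length_eq_wordDist hgen m k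
  have := wordDist_le_length (l₁ ++ l₂) (by simpa [or_imp, forall_and] using ⟨hT₁, hT₂⟩)
    (by rw [List.prod_append, ← mul_assoc, hp₁, hp₂])
  simpa [hl₁, hl₂] using this

theorem wordDist_triangle_real (hgen : Subgroup.closure T = ⊤) (g m k : H) :
    (wordDist T g k : ℝ) ≤ wordDist T g m + wordDist T m k := by
  exact_mod_cast wordDist_triangle hgen g m k

theorem finite_setOf_wordDist_one_le (hT : T.Finite) (hgen : Subgroup.closure T = ⊤) (R : ℕ) :
    {g : H | wordDist T 1 g ≤ R}.Finite := by
  let U := T ∪ T⁻¹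
  have : Finite U := (hT.union hT.inv).to_subtype
  refine ((List.finite_length_le U R).image fun l => (l.map Subtype.val).prod).subset ?_
  intro g hg
  obtain ⟨l, hl, hlT, hp⟩ := exists_list_length_eq_wordDist hgen 1 g
  refine ⟨l.attach.map fun a => ⟨a.1, hlT a.1 a.2⟩, by simpa [hl] using hg, ?_⟩
  simpa using hp

end WordMetric

section Geodesics

variable {H : Type*} [Group H] {T : Set H}

def IsWordGeodesic (T : Set H) (D : ℕ) (p : ℕ → H) : Prop :=
  ∀ i j, i ≤ j → j ≤ D → wordDist T (p i) (p j) = j - i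

theorem exists_isWordGeodesic (hgen : Subgroup.closure T = ⊤) (g : H) :
    ∃ p : ℕ → H, p 0 = 1 ∧ p (wordDist T 1 g) = g ∧ IsWordGeodesic T (wordDist T 1 g) p := by
  obtain ⟨l, hl, hlT, hlg⟩ := exists_list_length_eq_wordDist hgen 1 g
  rw [one_mul] at hlg
  refine ⟨fun i => (l.take i).prod, by simp, by simp [← hl, hlg], fun i j hij hjD => ?_⟩
  show wordDist T (l.take i).prod (l.take j).prod = j - i
  have hmid : wordDist T (l.take i).prod (l.take j).prod ≤ j - i :=
    (wordDist_le_length ((l.drop i).take (j - i))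
      (fun a ha => hlT a (List.mem_of_mem_drop (List.mem_of_mem_take ha)))
      (by rw [← List.prod_append, ← List.take_add, Nat.add_sub_cancel' hij])).trans
      (List.length_take_le _ _)
  have hstart : wordDist T 1 (l.take i).prod ≤ i :=
    (wordDist_le_length (l.take i) (fun a ha => hlT a (List.mem_of_mem_take ha))
      (one_mul _)).trans (List.length_take_le _ _)
  have hend : wordDist T (l.take j).prod g ≤ wordDist T 1 g - j := by
    refine (wordDist_le_length (l.drop j) (fun a ha => hlT a (List.mem_of_mem_drop ha))
      (by rw [← List.prod_append, List.take_append_drop, hlg])).trans ?_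
    rw [List.length_drop, hl]
  have := wordDist_triangle hgen 1 (l.take i).prod g
  have := wordDist_triangle hgen (l.take i).prod (l.take j).prod g
  omega

def IsQuasiGeodesic (T : Set H) (Λ K : ℝ) (n : ℕ) (γ : ℕ → H) : Prop :=
  ∀ i ≤ n, ∀ j ≤ n,
    (wordDist T (γ i) (γ j) : ℝ) ≤ Λ * |(i : ℝ) - (j : ℝ)| + K ∧
    Λ⁻¹ * |(i : ℝ) - (j : ℝ)| - K ≤ (wordDist T (γ i) (γ j) : ℝ)

theorem IsQuasiGeodesic.of_le {Λ K : ℝ} {n : ℕ} {γ : ℕ → H} (hΛ : 0 < Λ)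
    (h : ∀ i j, i ≤ j → j ≤ n →
      (wordDist T (γ i) (γ j) : ℝ) ≤ Λ * (j - i) + K ∧
      (j - i : ℝ) ≤ Λ * (wordDist T (γ i) (γ j) + K)) :
    IsQuasiGeodesic T Λ K n γ := by
  intro i hi j hj
  wlog hij : i ≤ j generalizing i j
  · rw [wordDist_comm, abs_sub_comm]
    exact this j hj i hi (by omega)
  rw [abs_sub_comm, abs_of_nonneg (sub_nonneg.2 (Nat.cast_le.2 hij)), sub_le_iff_le_add,
    inv_mul_le_iff₀ hΛ]
  exact h i j hij hj

theorem wordDist_le_mul_sub_of_forall_succ (hgen : Subgroup.closure T = ⊤) {γ : ℕ → H} {c : ℝ}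
    {n : ℕ} (hstep : ∀ i < n, (wordDist T (γ i) (γ (i + 1)) : ℝ) ≤ c) {i j : ℕ} (hij : i ≤ j)
    (hjn : j ≤ n) : (wordDist T (γ i) (γ j) : ℝ) ≤ c * (j - i) := by
  induction j, hij using Nat.le_induction with
  | base => simp [wordDist_self]
  | succ j hij ih =>
    have := ih (by omega)
    have := hstep j (by omega)
    have := wordDist_triangle_real hgen (γ i) (γ j) (γ (j + 1))
    push_cast
    linarith

def QuasiGeodesicsStayNear (T : Set H) (h : H) (Λ K M : ℝ) : Prop :=
  ∀ (n : ℕ) (γ : ℕ → H), IsQuasiGeodesic T Λ K n γ →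
    (∃ s : ℤ, γ 0 = h ^ s) → (∃ t : ℤ, γ n = h ^ t) →
    ∀ i ≤ n, ∃ m : ℤ, (wordDist T (γ i) (h ^ m) : ℝ) ≤ M

end Geodesics

section DetourPath

variable {H : Type*} [Group H] {T : Set H}

/-- Meant for `p` a geodesic from `1` to `z` of length `D`: the legs are `h ^ (-n) * p`, then
`z * h ^ t` for `|t| ≤ n`, then `h ^ n * p` run backwards. -/
def detourPath (h z : H) (p : ℕ → H) (D n i : ℕ) : H :=
  if i < D then h ^ (-(n : ℤ)) * p i
  else if i ≤ D + 2 * n then z * h ^ ((i : ℤ) - D - n)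
  else h ^ (n : ℤ) * p (2 * D + 2 * n - i)

variable {h z : H} {p : ℕ → H} {D n i j : ℕ} {A B : ℝ}

theorem detourPath_inv (hi : i ≤ 2 * D + 2 * n) :
    detourPath h⁻¹ z p D n i = detourPath h z p D n (2 * D + 2 * n - i) := by
  unfold detourPath
  split_ifs <;> try omega
  · rw [inv_zpow', neg_neg, Nat.sub_sub_self hi]
  · rw [inv_zpow', Nat.cast_sub hi]
    push_cast
    ring_nf
  · rw [inv_zpow']

theorem detourPath_of_le (hzh : Commute z h) (hpD : p D = z) (hi : i ≤ D) :
    detourPath h z p D n i = h ^ (-(n : ℤ)) * p i := by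
  rcases hi.lt_or_eq with hi | rfl
  · exact if_pos hi
  · rw [detourPath, if_neg (lt_irrefl _), if_pos (by omega), hpD, sub_self, zero_sub,
      (hzh.zpow_right _).eq]

theorem detourPath_of_mem (hDi : D ≤ i) (hi : i ≤ D + 2 * n) :
    detourPath h z p D n i = z * h ^ ((i : ℤ) - D - n) := by
  rw [detourPath, if_neg (by omega), if_pos hi]

theorem detourPath_of_ge (hzh : Commute z h) (hpD : p D = z) (hi : D + 2 * n ≤ i)
    (hiN : i ≤ 2 * D + 2 * n) :
    detourPath h z p D n i = h ^ (n : ℤ) * p (2 * D + 2 * n - i) := by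
  calc detourPath h z p D n i = detourPath h⁻¹ z p D n (2 * D + 2 * n - i) := by
        rw [detourPath_inv (Nat.sub_le _ _), Nat.sub_sub_self hiN]
    _ = h ^ (n : ℤ) * p (2 * D + 2 * n - i) := by
        rw [detourPath_of_le hzh.inv_right hpD (by omega), inv_zpow', neg_neg]

theorem wordDist_detourPath_succ_le {c : ℝ} (hzh : Commute z h) (hpD : p D = z)
    (hp : IsWordGeodesic T D p) (hstep : (wordDist T 1 h : ℝ) ≤ c) (hc : 1 ≤ c)
    (hi : i < 2 * D + 2 * n) :
    (wordDist T (detourPath h z p D n i) (detourPath h z p D n (i + 1)) : ℝ) ≤ c := by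
  rcases lt_or_ge i D with hiD | hiD
  · rw [detourPath_of_le hzh hpD hiD.le, detourPath_of_le hzh hpD hiD, wordDist_mul_left,
      hp i (i + 1) (by omega) hiD]
    simpa using hc
  rcases lt_or_ge i (D + 2 * n) with hiM | hiM
  · rw [detourPath_of_mem hiD (by omega), detourPath_of_mem (by omega) hiM, wordDist_mul_left,
      show ((i + 1 : ℕ) : ℤ) - D - n = ((i : ℤ) - D - n) + 1 by push_cast; ring, zpow_add_one,
      wordDist_eq_wordDist_one, inv_mul_cancel_left]
    exact hstep
  · rw [detourPath_of_ge hzh hpD hiM (by omega), detourPath_of_ge hzh hpD (by omega) hi,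
      wordDist_mul_left, wordDist_comm,
      hp (2 * D + 2 * n - (i + 1)) (2 * D + 2 * n - i) (by omega) (by omega),
      show 2 * D + 2 * n - i - (2 * D + 2 * n - (i + 1)) = 1 by omega]
    simpa using hc

theorem wordDist_detourPath_zpow_neg (hzh : Commute z h) (hp0 : p 0 = 1) (hpD : p D = z)
    (hp : IsWordGeodesic T D p) (hi : i ≤ D) :
    wordDist T (detourPath h z p D n i) (h ^ (-(n : ℤ))) = i := by
  rw [detourPath_of_le hzh hpD hi, wordDist_comm, wordDist_eq_wordDist_one, inv_mul_cancel_left,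
    ← hp0, hp 0 i (Nat.zero_le i) hi, Nat.sub_zero]

theorem wordDist_detourPath_mul_zpow_neg (hzh : Commute z h) (hpD : p D = z)
    (hp : IsWordGeodesic T D p) (hi : i ≤ D) :
    wordDist T (detourPath h z p D n i) (z * h ^ (-(n : ℤ))) = D - i := by
  rw [detourPath_of_le hzh hpD hi, (hzh.zpow_right _).eq, wordDist_mul_left, ← hpD,
    hp i D hi le_rfl]

theorem wordDist_detourPath_of_le (hzh : Commute z h) (hpD : p D = z)
    (hp : IsWordGeodesic T D p) (hij : i ≤ j) (hjD : j ≤ D) :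
    wordDist T (detourPath h z p D n i) (detourPath h z p D n j) = j - i := by
  rw [detourPath_of_le hzh hpD (hij.trans hjD), detourPath_of_le hzh hpD hjD, wordDist_mul_left,
    hp i j hij hjD]

theorem sub_le_wordDist_detourPath_of_mem (hlo : ∀ s t : ℤ,
      |(s : ℝ) - t| ≤ A * (wordDist T (h ^ s) (h ^ t) + B))
    (hDi : D ≤ i) (hij : i ≤ j) (hj : j ≤ D + 2 * n) :
    (j - i : ℝ) ≤ A * (wordDist T (detourPath h z p D n i) (detourPath h z p D n j) + B) := by
  rw [detourPath_of_mem hDi (hij.trans hj), detourPath_of_mem (hDi.trans hij) hj,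
    wordDist_mul_left]
  have := (neg_le_abs _).trans (hlo ((i : ℤ) - D - n) ((j : ℤ) - D - n))
  push_cast at this
  linarith

theorem sub_le_wordDist_detourPath_left_mid (hgen : Subgroup.closure T = ⊤) (hA : 1 ≤ A)
    (hB : 0 ≤ B) (hlo : ∀ s t : ℤ, |(s : ℝ) - t| ≤ A * (wordDist T (h ^ s) (h ^ t) + B))
    (hzh : Commute z h) (hp0 : p 0 = 1) (hpD : p D = z) (hp : IsWordGeodesic T D p)
    (hfar : ∀ t m : ℤ, D ≤ wordDist T (z * h ^ t) (h ^ m))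
    (hiD : i ≤ D) (hDj : D ≤ j) (hj : j ≤ D + 2 * n) :
    (j - i : ℝ) ≤
      3 * A * (wordDist T (detourPath h z p D n i) (detourPath h z p D n j) + B) := by
  set γ := detourPath h z p D n
  set d : ℝ := (wordDist T (γ i) (γ j) : ℝ)
  have hi₁ : (wordDist T (γ i) (h ^ (-(n : ℤ))) : ℝ) = i := by
    exact_mod_cast wordDist_detourPath_zpow_neg hzh hp0 hpD hp hiD
  have hi₂ : (wordDist T (γ i) (z * h ^ (-(n : ℤ))) : ℝ) = D - i := by
    rw [wordDist_detourPath_mul_zpow_neg hzh hpD hp hiD, Nat.cast_sub hiD]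
  have hγj : γ j = z * h ^ ((j : ℤ) - D - n) := detourPath_of_mem hDj hj
  have hj₁ : (D : ℝ) ≤ wordDist T (γ j) (h ^ (-(n : ℤ))) := by
    rw [hγj]
    exact_mod_cast hfar _ _
  have hj₂ : (j - D : ℝ) ≤ A * (wordDist T (γ j) (z * h ^ (-(n : ℤ))) + B) := by
    rw [hγj, wordDist_mul_left]
    have := (le_abs_self _).trans (hlo ((j : ℤ) - D - n) (-n))
    push_cast at this
    linarith
  have hd : (wordDist T (γ j) (γ i) : ℝ) = d := by rw [wordDist_comm]
  have t₁ := wordDist_triangle_real hgen (γ j) (γ i) (h ^ (-(n : ℤ)))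
  have t₂ := wordDist_triangle_real hgen (γ j) (γ i) (z * h ^ (-(n : ℤ)))
  have hd₀ : 0 ≤ d := Nat.cast_nonneg _
  -- `γ j` is at distance at least `D` from `⟨h⟩`, so `γ i` is at least `D - i` away from it
  have hleft : (D - i : ℝ) ≤ d := by linarith
  have hmid : (j - D : ℝ) ≤ A * (2 * d + B) := by nlinarith
  nlinarith

theorem sub_le_wordDist_detourPath_left_right (hgen : Subgroup.closure T = ⊤) (hA : 1 ≤ A)
    (hlo : ∀ s t : ℤ, |(s : ℝ) - t| ≤ A * (wordDist T (h ^ s) (h ^ t) + B))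
    (hzh : Commute z h) (hp0 : p 0 = 1) (hpD : p D = z) (hp : IsWordGeodesic T D p)
    (hn : 2 * A * D ≤ n) (hiD : i ≤ D) (hj : D + 2 * n ≤ j) (hjN : j ≤ 2 * D + 2 * n) :
    (j - i : ℝ) ≤
      3 * A * (wordDist T (detourPath h z p D n i) (detourPath h z p D n j) + B) := by
  set γ := detourPath h z p D n
  set d : ℝ := (wordDist T (γ i) (γ j) : ℝ)
  have hi₁ : (wordDist T (h ^ (-(n : ℤ))) (γ i) : ℝ) = i := by
    rw [wordDist_comm]
    exact_mod_cast wordDist_detourPath_zpow_neg hzh hp0 hpD hp hiD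
  have hj₁ : (wordDist T (γ j) (h ^ (n : ℤ)) : ℝ) = 2 * D + 2 * n - j := by
    have hγj : γ j = h ^ (n : ℤ) * p (2 * D + 2 * n - j) := detourPath_of_ge hzh hpD hj hjN
    rw [hγj, wordDist_comm, wordDist_eq_wordDist_one,
      inv_mul_cancel_left, ← hp0, hp 0 _ (Nat.zero_le _) (by omega), Nat.sub_zero,
      Nat.cast_sub hjN]
    push_cast
    ring
  have hends : (2 * n : ℝ) ≤ A * (wordDist T (h ^ (-(n : ℤ))) (h ^ (n : ℤ)) + B) := by
    have := (neg_le_abs _).trans (hlo (-n) n)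
    push_cast at this
    linarith
  have t₁ := wordDist_triangle_real hgen (h ^ (-(n : ℤ))) (γ i) (h ^ (n : ℤ))
  have t₂ := wordDist_triangle_real hgen (γ i) (γ j) (h ^ (n : ℤ))
  have hiD' : (i : ℝ) ≤ D := by exact_mod_cast hiD
  have hjN' : (2 * D + 2 * n - j : ℝ) ≤ D := by
    have : ((D + 2 * n : ℕ) : ℝ) ≤ j := by exact_mod_cast hj
    push_cast at this
    linarith
  -- both ends of `γ` stay within `D` of `h ^ (∓ n)`, which are far apart once `n ≫ A D`
  have hspread : (2 * n : ℝ) ≤ A * (d + B) + 2 * A * D := by nlinarith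
  have hD : (D : ℝ) ≤ A * D := le_mul_of_one_le_left (Nat.cast_nonneg _) hA
  linarith

theorem sub_le_wordDist_detourPath_of_le (hgen : Subgroup.closure T = ⊤) (hA : 1 ≤ A)
    (hB : 0 ≤ B) (hlo : ∀ s t : ℤ, |(s : ℝ) - t| ≤ A * (wordDist T (h ^ s) (h ^ t) + B))
    (hzh : Commute z h) (hp0 : p 0 = 1) (hpD : p D = z) (hp : IsWordGeodesic T D p)
    (hfar : ∀ t m : ℤ, D ≤ wordDist T (z * h ^ t) (h ^ m)) (hn : 2 * A * D ≤ n)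
    (hiD : i ≤ D) (hij : i ≤ j) (hjN : j ≤ 2 * D + 2 * n) :
    (j - i : ℝ) ≤
      3 * A * (wordDist T (detourPath h z p D n i) (detourPath h z p D n j) + B) := by
  rcases le_or_gt j D with hjD | hDj
  · rw [wordDist_detourPath_of_le hzh hpD hp hij hjD, Nat.cast_sub hij]
    have : (0 : ℝ) ≤ j - i := sub_nonneg.2 (Nat.cast_le.2 hij)
    nlinarith
  rcases le_or_gt j (D + 2 * n) with hjM | hjR
  · exact sub_le_wordDist_detourPath_left_mid hgen hA hB hlo hzh hp0 hpD hp hfar hiD hDj.le hjM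
  · exact sub_le_wordDist_detourPath_left_right hgen hA hlo hzh hp0 hpD hp hn hiD hjR.le hjN

theorem sub_le_wordDist_detourPath (hgen : Subgroup.closure T = ⊤) (hA : 1 ≤ A)
    (hB : 0 ≤ B) (hlo : ∀ s t : ℤ, |(s : ℝ) - t| ≤ A * (wordDist T (h ^ s) (h ^ t) + B))
    (hzh : Commute z h) (hp0 : p 0 = 1) (hpD : p D = z) (hp : IsWordGeodesic T D p)
    (hfar : ∀ t m : ℤ, D ≤ wordDist T (z * h ^ t) (h ^ m)) (hn : 2 * A * D ≤ n)
    (hij : i ≤ j) (hjN : j ≤ 2 * D + 2 * n) :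
    (j - i : ℝ) ≤
      3 * A * (wordDist T (detourPath h z p D n i) (detourPath h z p D n j) + B) := by
  by_cases hiD : i ≤ D
  · exact sub_le_wordDist_detourPath_of_le hgen hA hB hlo hzh hp0 hpD hp hfar hn hiD hij hjN
  by_cases hjM : j ≤ D + 2 * n
  · have := sub_le_wordDist_detourPath_of_mem (z := z) (p := p) hlo (by omega) hij hjM
    have : (0 : ℝ) ≤ wordDist T (detourPath h z p D n i) (detourPath h z p D n j) :=
      Nat.cast_nonneg _
    nlinarith
  -- reversing the path exchanges `h` and `h⁻¹`, and brings `j` into the first segment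
  have hlo' : ∀ s t : ℤ, |(s : ℝ) - t| ≤ A * (wordDist T (h⁻¹ ^ s) (h⁻¹ ^ t) + B) := by
    intro s t
    have := hlo (-s) (-t)
    push_cast at this
    rwa [neg_sub_neg, abs_sub_comm, ← inv_zpow', ← inv_zpow'] at this
  have hfar' : ∀ t m : ℤ, D ≤ wordDist T (z * h⁻¹ ^ t) (h⁻¹ ^ m) := fun t m => by
    simpa only [inv_zpow'] using hfar (-t) (-m)
  have := sub_le_wordDist_detourPath_of_le (i := 2 * D + 2 * n - j) (j := 2 * D + 2 * n - i)
    hgen hA hB hlo' hzh.inv_right hp0 hpD hp hfar' hn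
    (by omega) (by omega) (by omega)
  rw [detourPath_inv (by omega), detourPath_inv (by omega), Nat.sub_sub_self hjN,
    Nat.sub_sub_self (by omega), wordDist_comm, Nat.cast_sub hjN, Nat.cast_sub (by omega)] at this
  linarith

theorem isQuasiGeodesic_detourPath (hgen : Subgroup.closure T = ⊤) (hA : 1 ≤ A) (hB : 0 ≤ B)
    (hstep : (wordDist T 1 h : ℝ) ≤ A + B)
    (hlo : ∀ s t : ℤ, |(s : ℝ) - t| ≤ A * (wordDist T (h ^ s) (h ^ t) + B))
    (hzh : Commute z h) (hp0 : p 0 = 1) (hpD : p D = z) (hp : IsWordGeodesic T D p)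
    (hfar : ∀ t m : ℤ, D ≤ wordDist T (z * h ^ t) (h ^ m)) (hn : 2 * A * D ≤ n) :
    IsQuasiGeodesic T (3 * A + B) B (2 * D + 2 * n) (detourPath h z p D n) := by
  refine .of_le (by linarith) fun i j hij hjN => ⟨?_, ?_⟩
  · have := wordDist_le_mul_sub_of_forall_succ hgen (γ := detourPath h z p D n)
      (fun k hk => wordDist_detourPath_succ_le hzh hpD hp hstep (by linarith) hk) hij hjN
    have : (0 : ℝ) ≤ j - i := sub_nonneg.2 (Nat.cast_le.2 hij)
    nlinarith
  · have := sub_le_wordDist_detourPath hgen hA hB hlo hzh hp0 hpD hp hfar hn hij hjN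
    have : (0 : ℝ) ≤ wordDist T (detourPath h z p D n i) (detourPath h z p D n j) + B := by
      positivity
    nlinarith

end DetourPath

section Centralizer

variable {H : Type*} [Group H] {T : Set H} {h z : H} {A B M : ℝ}

theorem le_wordDist_mul_zpow_zpow (hzh : Commute z h)
    (hmin : ∀ m : ℤ, wordDist T 1 z ≤ wordDist T 1 (z * h ^ m)) (t m : ℤ) :
    wordDist T 1 z ≤ wordDist T (z * h ^ t) (h ^ m) := by
  have : (h ^ m)⁻¹ * (z * h ^ t) = z * h ^ (t - m) := by
    rw [← zpow_neg, ← mul_assoc, ← (hzh.zpow_right _).eq, mul_assoc, ← zpow_add, neg_add_eq_sub]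
  rw [wordDist_comm (z * h ^ t), wordDist_eq_wordDist_one (h ^ m), this]
  exact hmin _

theorem wordDist_one_le_of_forall_le_mul_zpow (hgen : Subgroup.closure T = ⊤) (hA : 1 ≤ A)
    (hB : 0 ≤ B) (hstep : (wordDist T 1 h : ℝ) ≤ A + B)
    (hlo : ∀ s t : ℤ, |(s : ℝ) - t| ≤ A * (wordDist T (h ^ s) (h ^ t) + B))
    (hM : QuasiGeodesicsStayNear T h (3 * A + B) B M) (hzh : Commute z h)
    (hmin : ∀ m : ℤ, wordDist T 1 z ≤ wordDist T 1 (z * h ^ m)) :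
    (wordDist T 1 z : ℝ) ≤ M := by
  obtain ⟨p, hp0, hpD, hp⟩ := exists_isWordGeodesic hgen z
  have hfar := le_wordDist_mul_zpow_zpow hzh hmin
  set n := ⌈2 * A * wordDist T 1 z⌉₊
  have hγ := isQuasiGeodesic_detourPath hgen hA hB hstep hlo hzh hp0 hpD hp hfar (Nat.le_ceil _)
  obtain ⟨m, hm⟩ := hM _ _ hγ ⟨-n, by rw [detourPath_of_le hzh hpD (Nat.zero_le _), hp0, mul_one]⟩
    ⟨n, by rw [detourPath_of_ge hzh hpD (by omega) le_rfl, Nat.sub_self, hp0, mul_one]⟩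
    (wordDist T 1 z + n) (by omega)
  rw [detourPath_of_mem (by omega) (by omega)] at hm
  exact (Nat.cast_le.2 (hfar _ m)).trans hm

theorem exists_wordDist_one_mul_zpow_le (hgen : Subgroup.closure T = ⊤) (hA : 1 ≤ A)
    (hB : 0 ≤ B) (hstep : (wordDist T 1 h : ℝ) ≤ A + B)
    (hlo : ∀ s t : ℤ, |(s : ℝ) - t| ≤ A * (wordDist T (h ^ s) (h ^ t) + B))
    (hM : QuasiGeodesicsStayNear T h (3 * A + B) B M) {g : H} (hg : Commute g h) :
    ∃ m : ℤ, (wordDist T 1 (g * h ^ m) : ℝ) ≤ M := by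
  let f := fun m : ℤ => wordDist T 1 (g * h ^ m)
  refine ⟨Function.argmin f, wordDist_one_le_of_forall_le_mul_zpow hgen hA hB hstep hlo hM
    (hg.mul_left ((Commute.refl h).zpow_left _)) fun m => ?_⟩
  rw [mul_assoc, ← zpow_add]
  exact Function.argmin_le f _

end Centralizer

theorem Subgroup.finiteIndex_subgroupOf_of_exists_mul_mem {G : Type*} [Group G]
    {K L : Subgroup G} (hKL : K ≤ L) {F : Set G} (hF : F.Finite)
    (hrep : ∀ g ∈ L, ∃ k ∈ K, g * k ∈ F) : (K.subgroupOf L).FiniteIndex := by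
  have hFL : ((Subtype.val : L → G) ⁻¹' F).Finite := hF.preimage Subtype.val_injective.injOn
  have : Finite (L ⧸ K.subgroupOf L) := by
    refine Set.finite_univ_iff.1 ((hFL.image QuotientGroup.mk).subset fun q _ => ?_)
    obtain ⟨g, rfl⟩ := QuotientGroup.mk_surjective q
    obtain ⟨k, hk, hgk⟩ := hrep g g.2
    exact ⟨g * ⟨k, hKL hk⟩, hgk, QuotientGroup.mk_mul_of_mem _ hk⟩
  exact Subgroup.finiteIndex_of_finite_quotient

/-- If `h` is a Morse element of a finitely generated group `H` (its orbit map
`t ↦ h^t` is a quasi-isometric embedding of `ℤ` such that every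
`(Λ,K)`-quasi-geodesic between points of `⟨h⟩` stays within a constant of `⟨h⟩`),
then `⟨h⟩` has finite index in the centralizer of `h`. -/
theorem morse_cyclic_finite_index_in_centralizer
    {H : Type*} [Group H] (S : Finset H)
    (hgen : Subgroup.closure (S : Set H) = ⊤) (h : H)
    (A B : ℝ) (hA : 1 ≤ A) (hB : 0 ≤ B)
    (hqi_up : ∀ s t : ℤ,
      (wordDist (S : Set H) (h ^ s) (h ^ t) : ℝ) ≤ A * |(s : ℝ) - (t : ℝ)| + B)
    (hqi_lo : ∀ s t : ℤ,
      A⁻¹ * |(s : ℝ) - (t : ℝ)| - B ≤ (wordDist (S : Set H) (h ^ s) (h ^ t) : ℝ))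
    (hmorse : ∀ Λ K : ℝ, 1 ≤ Λ → 0 ≤ K → ∃ M : ℝ,
      ∀ (n : ℕ) (γ : ℕ → H),
        (∀ i ≤ n, ∀ j ≤ n,
          (wordDist (S : Set H) (γ i) (γ j) : ℝ) ≤ Λ * |(i : ℝ) - (j : ℝ)| + K ∧
          Λ⁻¹ * |(i : ℝ) - (j : ℝ)| - K ≤ (wordDist (S : Set H) (γ i) (γ j) : ℝ)) →
        (∃ s : ℤ, γ 0 = h ^ s) → (∃ t : ℤ, γ n = h ^ t) →
        ∀ i ≤ n, ∃ m : ℤ, (wordDist (S : Set H) (γ i) (h ^ m) : ℝ) ≤ M) :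
    ((Subgroup.zpowers h).subgroupOf (Subgroup.centralizer {h})).FiniteIndex := by
  have hlo : ∀ s t : ℤ, |(s : ℝ) - t| ≤ A * (wordDist (S : Set H) (h ^ s) (h ^ t) + B) :=
    fun s t => (inv_mul_le_iff₀ (by linarith)).1 (by linarith [hqi_lo s t])
  have hstep : (wordDist (S : Set H) 1 h : ℝ) ≤ A + B := by simpa using hqi_up 0 1
  obtain ⟨M, hM⟩ := hmorse (3 * A + B) B (by linarith) hB
  refine Subgroup.finiteIndex_subgroupOf_of_exists_mul_mem
    (Subgroup.zpowers_le.2 (Subgroup.mem_centralizer_singleton_iff.2 rfl))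
    (finite_setOf_wordDist_one_le S.finite_toSet hgen ⌈M⌉₊) fun g hg => ?_
  obtain ⟨m, hm⟩ := exists_wordDist_one_mul_zpow_le hgen hA hB hstep hlo hM
    (Subgroup.mem_centralizer_singleton_iff.1 hg)
  exact ⟨h ^ m, Subgroup.zpow_mem_zpowers h m, Nat.cast_le.1 (hm.trans (Nat.le_ceil M))⟩
end

section
/- Let (X,d) and (X',d') be metric spaces, A ⊆ X, and ρ: X → A a C-strongly contracting map. Suppose ι: X → X' is an isometric embedding whose image is ε-dense in X' (every point of X' is within distance ε of ι(X)). Then there exists a map ρ': X' → ι(A) which is (C+3ε)-strongly contracting. -/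
open Metric

/-- `γ` is a geodesic segment from `x₀` to `x₁`, parametrized by `[0, dist x₀ x₁]`. -/
def IsGeodesicSeg {X : Type*} [MetricSpace X] (γ : ℝ → X) (x₀ x₁ : X) : Prop :=
  γ 0 = x₀ ∧ γ (dist x₀ x₁) = x₁ ∧
    ∀ s ∈ Set.Icc (0 : ℝ) (dist x₀ x₁), ∀ t ∈ Set.Icc (0 : ℝ) (dist x₀ x₁),
      dist (γ s) (γ t) = |s - t|

/-- `ρ` is a `C`-strongly constricting map onto `A ⊆ X`. -/
def StronglyConstricting {X : Type*} [MetricSpace X] (C : ℝ) (A : Set X) (ρ : X → X) : Prop :=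
  (∀ x : X, ρ x ∈ A) ∧ (∀ a ∈ A, dist (ρ a) a ≤ C) ∧
    ∀ x₀ x₁ : X, ∀ γ : ℝ → X, IsGeodesicSeg γ x₀ x₁ → C < dist (ρ x₀) (ρ x₁) →
      (∃ t ∈ Set.Icc (0 : ℝ) (dist x₀ x₁), dist (ρ x₀) (γ t) < C) ∧
      (∃ t ∈ Set.Icc (0 : ℝ) (dist x₀ x₁), dist (ρ x₁) (γ t) < C)

/-- `ρ` is a `C`-strongly contracting map onto `A ⊆ X`. -/
def StronglyContracting {X : Type*} [MetricSpace X] (C : ℝ) (A : Set X) (ρ : X → X) : Prop :=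
  (∀ x : X, ρ x ∈ A) ∧ (∀ a ∈ A, dist (ρ a) a ≤ C) ∧
    (∀ x : X, dist x (ρ x) - infDist x A ≤ C) ∧
    ∀ u v : X, dist u v < infDist v A - C → dist (ρ u) (ρ v) ≤ C

private lemma aux_le_infDist {α : Type*} [MetricSpace α] {s : Set α} (hs : s.Nonempty)
    {x : α} {b : ℝ} (h : ∀ y ∈ s, b ≤ dist x y) : b ≤ infDist x s := by
  by_contra hlt
  push_neg at hlt
  obtain ⟨y, hy, hd⟩ := (infDist_lt_iff hs).1 hlt
  exact absurd hd (not_lt.2 (h y hy))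

/-- If `ρ : X → A` is `C`-strongly contracting and `ι : X → X'` is an isometric
embedding with `ε`-dense image, then there is a `(C + 3ε)`-strongly contracting
map `ρ' : X' → ι(A)`. -/
theorem strongly_contracting_of_isometric_dense_embedding
    {X X' : Type*} [MetricSpace X] [MetricSpace X'] (A : Set X) (C ε : ℝ)
    (hC : 0 ≤ C) (hε : 0 ≤ ε)
    (ρ : X → X) (hρ : StronglyContracting C A ρ)
    (ι : X → X') (hiso : ∀ x y : X, dist (ι x) (ι y) = dist x y)
    (hdense : ∀ x' : X', ∃ x : X, dist x' (ι x) ≤ ε) :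
    ∃ ρ' : X' → X', StronglyContracting (C + 3 * ε) (ι '' A) ρ' := by
  obtain ⟨hmem, hnear, hdisp, hcon⟩ := hρ
  set s : X' → X := fun x' => (hdense x').choose with hs
  have hsd : ∀ x' : X', dist x' (ι (s x')) ≤ ε := fun x' => (hdense x').choose_spec
  refine ⟨fun x' => ι (ρ (s x')), ?_, ?_, ?_, ?_⟩
  · exact fun x' => ⟨ρ (s x'), hmem _, rfl⟩
  · rintro a' ⟨a, ha, rfl⟩
    have h1 : dist (s (ι a)) a ≤ ε := by
      rw [← hiso]
      rw [dist_comm]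
      exact hsd (ι a)
    have h2 : infDist (s (ι a)) A ≤ ε := le_trans (infDist_le_dist_of_mem ha) h1
    have h3 := hdisp (s (ι a))
    calc dist (ι (ρ (s (ι a)))) (ι a) = dist (ρ (s (ι a))) a := hiso _ _
      _ ≤ dist (ρ (s (ι a))) (s (ι a)) + dist (s (ι a)) a := dist_triangle _ _ _
      _ ≤ (C + ε) + ε := by
          rw [dist_comm]; have := hsd (ι a); nlinarith
      _ ≤ C + 3 * ε := by linarith
  · intro x'
    have hAne : A.Nonempty := ⟨ρ (s x'), hmem _⟩
    have hne : (ι '' A).Nonempty := hAne.image ι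
    have hlow : infDist (s x') A - ε ≤ infDist x' (ι '' A) := by
      refine aux_le_infDist hne ?_
      rintro b' ⟨b, hb, rfl⟩
      have ht := dist_triangle (ι (s x')) x' (ι b)
      rw [hiso, dist_comm (ι (s x')) x'] at ht
      have h4 : infDist (s x') A ≤ dist (s x') b := infDist_le_dist_of_mem hb
      have h5 := hsd x'
      linarith
    have h6 := hdisp (s x')
    have h7 := hsd x'
    have : dist x' (ι (ρ (s x'))) ≤ dist x' (ι (s x')) + dist (s x') (ρ (s x')) := by
      have := dist_triangle x' (ι (s x')) (ι (ρ (s x')))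
      rwa [hiso] at this
    linarith
  · intro u' v' huv
    have hAne : A.Nonempty := ⟨ρ (s v'), hmem _⟩
    have hup : infDist v' (ι '' A) - ε ≤ infDist (s v') A := by
      refine aux_le_infDist hAne ?_
      intro b hb
      have h1 : dist v' (ι b) ≤ dist v' (ι (s v')) + dist (s v') b := by
        have := dist_triangle v' (ι (s v')) (ι b)
        rwa [hiso] at this
      have h2 : infDist v' (ι '' A) ≤ dist v' (ι b) :=
        infDist_le_dist_of_mem ⟨b, hb, rfl⟩
      have h3 := hsd v'
      linarith
    have hduv : dist (s u') (s v') ≤ 2 * ε + dist u' v' := by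
      have := dist_triangle (ι (s u')) u' (ι (s v'))
      have h2 := dist_triangle u' v' (ι (s v'))
      rw [hiso] at this
      have h3 := hsd u'
      have h4 := hsd v'
      rw [dist_comm (ι (s u')) u'] at this
      linarith
    have key : dist (s u') (s v') < infDist (s v') A - C := by linarith
    have := hcon _ _ key
    calc dist (ι (ρ (s u'))) (ι (ρ (s v'))) = dist (ρ (s u')) (ρ (s v')) := hiso _ _
      _ ≤ C := this
      _ ≤ C + 3 * ε := by linarith
end

section
/- Let G be a Garside group of finite type. If h ∈ G decomposes as h = h₁h₂h₃ with inf(h) = inf(h₁) = inf(h₂) = inf(h₃) = 0 and h is absorbable, then h₁, h₂ and h₃ are also absorbable. -/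
/-- A Garside structure on a group `G`: a positive monoid `pos` with trivial units,
a Garside element `Δ`, lattice operations for the prefix and suffix orders,
generation by simple elements, bounded decompositions, and the `inf`/`sup`
functions counting powers of `Δ`. -/
structure GarsideStructure (G : Type*) [Group G] where
  pos : Submonoid G
  Δ : G
  no_inv : ∀ x : G, x ∈ pos → x⁻¹ ∈ pos → x = 1
  /-- greatest common prefix -/
  wedge : G → G → G
  wedge_le_left : ∀ x y : G, (wedge x y)⁻¹ * x ∈ pos
  wedge_le_right : ∀ x y : G, (wedge x y)⁻¹ * y ∈ pos
  le_wedge : ∀ x y z : G, z⁻¹ * x ∈ pos → z⁻¹ * y ∈ pos → z⁻¹ * wedge x y ∈ pos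
  /-- greatest common suffix -/
  wedgeL : G → G → G
  wedgeL_le_left : ∀ x y : G, x * (wedgeL x y)⁻¹ ∈ pos
  wedgeL_le_right : ∀ x y : G, y * (wedgeL x y)⁻¹ ∈ pos
  le_wedgeL : ∀ x y z : G, x * z⁻¹ ∈ pos → y * z⁻¹ ∈ pos → wedgeL x y * z⁻¹ ∈ pos
  /-- least common right multiple -/
  vee : G → G → G
  le_vee_left : ∀ x y : G, x⁻¹ * vee x y ∈ pos
  le_vee_right : ∀ x y : G, y⁻¹ * vee x y ∈ pos
  vee_le : ∀ x y z : G, x⁻¹ * z ∈ pos → y⁻¹ * z ∈ pos → (vee x y)⁻¹ * z ∈ pos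
  /-- least common left multiple -/
  veeL : G → G → G
  le_veeL_left : ∀ x y : G, veeL x y * x⁻¹ ∈ pos
  le_veeL_right : ∀ x y : G, veeL x y * y⁻¹ ∈ pos
  veeL_le : ∀ x y z : G, z * x⁻¹ ∈ pos → z * y⁻¹ ∈ pos → z * (veeL x y)⁻¹ ∈ pos
  Δ_pos : Δ ∈ pos
  simples_generate : Subgroup.closure {x : G | x ∈ pos ∧ x⁻¹ * Δ ∈ pos} = ⊤
  bounded_decompositions : ∀ x : G, x ∈ pos → x ≠ 1 →
    ∃ n : ℕ, ∀ l : List G, (∀ a ∈ l, a ∈ pos ∧ a ≠ 1) → l.prod = x → l.length ≤ n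
  inff : G → ℤ
  supp : G → ℤ
  inff_le : ∀ g : G, (Δ ^ inff g)⁻¹ * g ∈ pos
  inff_max : ∀ (g : G) (r : ℤ), (Δ ^ r)⁻¹ * g ∈ pos → r ≤ inff g
  le_supp : ∀ g : G, g⁻¹ * Δ ^ supp g ∈ pos
  supp_min : ∀ (g : G) (s : ℤ), g⁻¹ * Δ ^ s ∈ pos → supp g ≤ s

namespace GarsideStructure

variable {G : Type*} [Group G] (S : GarsideStructure G)

/-- the prefix order: `x ≼ y`. -/
def pref (x y : G) : Prop := x⁻¹ * y ∈ S.pos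

/-- the set of simple elements `𝒟`. -/
def simples : Set G := {x : G | x ∈ S.pos ∧ S.pref x S.Δ}

/-- a Garside structure is of finite type if the set of simples is finite. -/
def FiniteType : Prop := S.simples.Finite

/-- proper simple elements (different from `1` and `Δ`). -/
def properSimples : Set G := {x : G | x ∈ S.simples ∧ x ≠ 1 ∧ x ≠ S.Δ}

/-- the distinguished representative `g̲ = g Δ^{-inf g}` of the coset `g⟨Δ⟩`. -/
def rep (g : G) : G := g * S.Δ ^ (-S.inff g)

/-- canonical length `ℓ(g) = sup(g) - inf(g)`. -/
def ell (g : G) : ℤ := S.supp g - S.inff g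

/-- `Δ`-purity: the center of `G` is generated by `Δ^e`. -/
def DeltaPure (e : ℕ) : Prop :=
  0 < e ∧ Subgroup.zpowers (S.Δ ^ e) = Subgroup.center G

/-- adjacency of the vertices `g⟨Δ⟩`, `h⟨Δ⟩` in the graph `𝒳 = Γ(G,𝒟)/⟨Δ⟩`:
there is a proper simple element `s` with `g̲ s ∈ h⟨Δ⟩`. -/
def adjX (g h : G) : Prop :=
  ∃ s ∈ S.properSimples, ∃ t : ℤ, S.rep g * s = h * S.Δ ^ t

/-- `chainX n g h`: there is an edge-path of length `n` in `𝒳` from `g⟨Δ⟩` to `h⟨Δ⟩`. -/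
def chainX : ℕ → G → G → Prop
  | 0, g, h => ∃ t : ℤ, g = h * S.Δ ^ t
  | n + 1, g, h => ∃ k : G, (S.adjX g k ∨ S.adjX k g) ∧ chainX n k h

/-- the graph metric of `𝒳`, evaluated on coset representatives. -/
noncomputable def dX (g h : G) : ℕ := sInf {n : ℕ | S.chainX n g h}

/-- `(s,t)` is left-weighted: `∂(s) ∧ t = 1`. -/
def leftWeighted (s t : G) : Prop := S.wedge (s⁻¹ * S.Δ) t = 1

/-- `l` is the sequence of factors of a left normal form (no `Δ` factors). -/
def isLNF (l : List G) : Prop :=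
  (∀ s ∈ l, s ∈ S.properSimples) ∧ l.Chain' S.leftWeighted

/-- the pair `(u,v)` (with `u` the left factor) is right-weighted: `∂⁻¹(v) ∧↰ u = 1`. -/
def rightWeighted (u v : G) : Prop := S.wedgeL (S.Δ * v⁻¹) u = 1

/-- `l` is the sequence of factors of a right normal form (no `Δ` factors). -/
def isRNF (l : List G) : Prop :=
  (∀ s ∈ l, s ∈ S.properSimples) ∧ l.Chain' S.rightWeighted

/-- `x` (with `inf x = 0`) is right-rigid: writing its right normal form as
`x_r ⋯ x_1`, the preferred simple suffix `x_1 ∧↰ ∂⁻¹(x_r)` is trivial. -/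
def rightRigid (x : G) : Prop :=
  ∃ l : List G, S.isRNF l ∧ l.prod = x ∧
    ∀ hne : l ≠ [], S.wedgeL (l.getLast hne) (S.Δ * (l.head hne)⁻¹) = 1

/-- the vertex `g⟨Δ⟩` lies on the axis `{x^t⟨Δ⟩}` of `x` in `𝒳`. -/
def onAxis (x g : G) : Prop := ∃ s t : ℤ, g = x ^ s * S.Δ ^ t

/-- `γ` is a `(2,0)`-quasi-geodesic (of combinatorial length `n`) in `𝒳`. -/
def isQG20 (γ : ℕ → G) (n : ℕ) : Prop :=
  ∀ i ≤ n, ∀ j ≤ n,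
    (S.dX (γ i) (γ j) : ℤ) ≤ 2 * |(i : ℤ) - (j : ℤ)| ∧
      |(i : ℤ) - (j : ℤ)| ≤ 2 * (S.dX (γ i) (γ j) : ℤ)

/-- `M` is a Morse constant for `(2,0)`-quasi-geodesics with endpoints on the
axis of `x` in `𝒳`. -/
def MorseConst20 (x : G) (M : ℕ) : Prop :=
  ∀ (γ : ℕ → G) (n : ℕ), S.isQG20 γ n →
    S.onAxis x (γ 0) → S.onAxis x (γ n) →
    ∀ i ≤ n, ∃ m : ℤ, S.dX (γ i) (x ^ m) ≤ M

/-- `m` is `max {k : x ⋠ (x^k h)‾}`, i.e. `m = -λ(h)` in the notation of the paper. -/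
def lambdaSpec (x h : G) (m : ℤ) : Prop :=
  ¬ S.pref x (S.rep (x ^ m * h)) ∧
    ∀ k : ℤ, ¬ S.pref x (S.rep (x ^ k * h)) → k ≤ m

/-- absorbable elements. -/
def absorbable (h : G) : Prop :=
  (S.inff h = 0 ∨ S.supp h = 0) ∧
    ∃ g : G, S.inff g = S.inff (g * h) ∧ S.supp g = S.supp (g * h)

end GarsideStructure

/-- If `h = h₁ h₂ h₃` with `inf h = inf h₁ = inf h₂ = inf h₃ = 0` and `h` is
absorbable, then `h₁`, `h₂` and `h₃` are absorbable. -/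
theorem factors_of_absorbable_are_absorbable
    {G : Type*} [Group G] (S : GarsideStructure G) (hfin : S.FiniteType)
    (h h1 h2 h3 : G) (hdec : h = h1 * h2 * h3)
    (h0 : S.inff h = 0) (h10 : S.inff h1 = 0) (h20 : S.inff h2 = 0)
    (h30 : S.inff h3 = 0) (habs : S.absorbable h) :
    S.absorbable h1 ∧ S.absorbable h2 ∧ S.absorbable h3 := by
  -- elements with inf = 0 are positive
  have mem_pos : ∀ a : G, S.inff a = 0 → a ∈ S.pos := by
    intro a ha
    have := S.inff_le a
    rw [ha] at this
    simpa using this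
  have p1 := mem_pos h1 h10
  have p2 := mem_pos h2 h20
  have p3 := mem_pos h3 h30
  -- monotonicity of inff under right multiplication by a positive
  have inff_mono : ∀ a b : G, b ∈ S.pos → S.inff a ≤ S.inff (a * b) := by
    intro a b hb
    apply S.inff_max
    have h1 := S.inff_le a
    have : (S.Δ ^ S.inff a)⁻¹ * (a * b) = ((S.Δ ^ S.inff a)⁻¹ * a) * b := by group
    rw [this]
    exact mul_mem h1 hb
  -- monotonicity of supp under right multiplication by a positive
  have supp_mono : ∀ a b : G, b ∈ S.pos → S.supp a ≤ S.supp (a * b) := by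
    intro a b hb
    apply S.supp_min
    have h1 := S.le_supp (a * b)
    have : a⁻¹ * S.Δ ^ S.supp (a * b) = b * ((a * b)⁻¹ * S.Δ ^ S.supp (a * b)) := by
      group
    rw [this]
    exact mul_mem hb h1
  obtain ⟨-, g, hginf, hgsup⟩ := habs
  rw [hdec] at hginf hgsup
  have e1 : g * (h1 * h2 * h3) = ((g * h1) * h2) * h3 := by group
  rw [e1] at hginf hgsup
  -- chains of inequalities collapse
  have i1 : S.inff g ≤ S.inff (g * h1) := inff_mono g h1 p1
  have i2 : S.inff (g * h1) ≤ S.inff (g * h1 * h2) := inff_mono _ h2 p2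
  have i3 : S.inff (g * h1 * h2) ≤ S.inff (g * h1 * h2 * h3) := inff_mono _ h3 p3
  have s1 : S.supp g ≤ S.supp (g * h1) := supp_mono g h1 p1
  have s2 : S.supp (g * h1) ≤ S.supp (g * h1 * h2) := supp_mono _ h2 p2
  have s3 : S.supp (g * h1 * h2) ≤ S.supp (g * h1 * h2 * h3) := supp_mono _ h3 p3
  refine ⟨⟨Or.inl h10, g, ?_, ?_⟩, ⟨Or.inl h20, g * h1, ?_, ?_⟩,
    ⟨Or.inl h30, g * h1 * h2, ?_, ?_⟩⟩ <;> omega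
end

section
/- Let X be a geodesic metric space, A ⊆ X, and ρ: X → A a C-strongly contracting map. Then ρ is C-strongly constricting with some constant C' depending only on C; conversely every C-strongly constricting map to A is C''-strongly contracting for some C'' depending only on C. (Equivalence of strong contraction and strong constriction.) -/
open Metric

/-- Reversal of a geodesic segment. -/
lemma IsGeodesicSeg.rev {X : Type} [MetricSpace X] {γ : ℝ → X} {x₀ x₁ : X}
    (h : IsGeodesicSeg γ x₀ x₁) :
    IsGeodesicSeg (fun t => γ (dist x₀ x₁ - t)) x₁ x₀ := by
  obtain ⟨h0, h1, hd⟩ := h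
  have hc : dist x₁ x₀ = dist x₀ x₁ := dist_comm _ _
  refine ⟨by simpa using h1, ?_, ?_⟩
  · show γ (dist x₀ x₁ - dist x₁ x₀) = x₀
    rw [hc, sub_self]
    exact h0
  · intro s hs t ht
    rw [hc] at hs ht
    show dist (γ (dist x₀ x₁ - s)) (γ (dist x₀ x₁ - t)) = |s - t|
    have hs' : dist x₀ x₁ - s ∈ Set.Icc (0:ℝ) (dist x₀ x₁) :=
      ⟨by linarith [hs.2], by linarith [hs.1]⟩
    have ht' : dist x₀ x₁ - t ∈ Set.Icc (0:ℝ) (dist x₀ x₁) :=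
      ⟨by linarith [ht.2], by linarith [ht.1]⟩
    rw [hd _ hs' _ ht',
      show dist x₀ x₁ - s - (dist x₀ x₁ - t) = -(s - t) by ring, abs_neg]

/-- The key half: a strongly contracting map sends geodesics with far-apart projected
endpoints close to the projection of the first endpoint. -/
lemma strongly_contracting_near_first {X : Type} [MetricSpace X] {C : ℝ} (hC : 0 ≤ C)
    {A : Set X} {ρ : X → X} (hcontr : StronglyContracting C A ρ) {x₀ x₁ : X} {γ : ℝ → X}
    (hγ : IsGeodesicSeg γ x₀ x₁) (hD : 14*C + 2 < dist (ρ x₀) (ρ x₁)) :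
    ∃ t ∈ Set.Icc (0:ℝ) (dist x₀ x₁), dist (ρ x₀) (γ t) < 14*C + 2 := by
  obtain ⟨hρA, hρa, hρd, hρc⟩ := hcontr
  obtain ⟨hγ0, hγ1, hγd⟩ := hγ
  by_contra hcon
  push_neg at hcon
  set L := dist x₀ x₁ with hLdef
  have hL0 : (0:ℝ) ≤ L := dist_nonneg
  have h0I : (0:ℝ) ∈ Set.Icc (0:ℝ) L := ⟨le_rfl, hL0⟩
  have hLI : L ∈ Set.Icc (0:ℝ) L := ⟨hL0, le_rfl⟩
  have hx₀ : ∀ t ∈ Set.Icc (0:ℝ) L, dist x₀ (γ t) = t := by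
    intro t ht
    rw [← hγ0, hγd 0 h0I t ht, zero_sub, abs_neg, abs_of_nonneg ht.1]
  have hfx₀ : infDist x₀ A = infDist (γ 0) A := by rw [hγ0]
  -- each point is within (infDist + C) of its projection
  have hnear : ∀ t ∈ Set.Icc (0:ℝ) L, dist (ρ (γ t)) (γ t) ≤ infDist (γ t) A + C := by
    intro t ht
    have h := hρd (γ t)
    rw [dist_comm]
    linarith
  -- avoidance inequality
  have havoid : ∀ t ∈ Set.Icc (0:ℝ) L,
      14*C + 2 ≤ dist (ρ x₀) (ρ (γ t)) + infDist (γ t) A + C := by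
    intro t ht
    have h1 := hcon t ht
    have h2 := dist_triangle (ρ x₀) (ρ (γ t)) (γ t)
    have h3 := hnear t ht
    linarith
  have hf0 : 13*C + 2 ≤ infDist (γ 0) A := by
    have h := havoid 0 h0I
    rw [hγ0, dist_self] at h
    rw [hγ0]
    linarith
  -- (F2) anchor at x₀
  have hF2 : ∀ t ∈ Set.Icc (0:ℝ) L, t < infDist (γ 0) A - C →
      dist (ρ x₀) (ρ (γ t)) ≤ C := by
    intro t ht hlt
    have hcond : dist (γ t) x₀ < infDist x₀ A - C := by
      rw [dist_comm, hx₀ t ht, hfx₀]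
      exact hlt
    have h := hρc (γ t) x₀ hcond
    rw [dist_comm]
    exact h
  -- (F1) anchor at γ t itself (covering x₀)
  have hF1 : ∀ t ∈ Set.Icc (0:ℝ) L, t < infDist (γ t) A - C →
      dist (ρ x₀) (ρ (γ t)) ≤ C := by
    intro t ht hlt
    exact hρc x₀ (γ t) (by rw [hx₀ t ht]; exact hlt)
  -- pinning inequality
  have hpin : ∀ t ∈ Set.Icc (0:ℝ) L,
      t ≤ infDist (γ 0) A + infDist (γ t) A + dist (ρ x₀) (ρ (γ t)) + 2*C := by
    intro t ht
    have h1 : dist x₀ (γ t) ≤ dist x₀ (ρ x₀) + dist (ρ x₀) (ρ (γ t)) + dist (ρ (γ t)) (γ t) :=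
      dist_triangle4 _ _ _ _
    have h2 : dist x₀ (ρ x₀) - infDist x₀ A ≤ C := hρd x₀
    rw [hfx₀] at h2
    have h3 := hnear t ht
    have h4 := hx₀ t ht
    linarith
  have lemA : ∀ s ∈ Set.Icc (0:ℝ) L, dist (ρ x₀) (ρ (γ s)) ≤ 3*C →
      s < infDist (γ 0) A + 8*C + 2 → dist (ρ x₀) (ρ (γ s)) ≤ 2*C := by
    intro s hsI hu3 hsmall
    rcases lt_or_ge s (infDist (γ 0) A - C) with h1 | h1
    · linarith [hF2 s hsI h1]
    · have hfs : 10*C + 2 ≤ infDist (γ s) A := by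
        have h := havoid s hsI
        linarith
      rcases lt_or_ge s (infDist (γ s) A - C) with h2 | h2
      · linarith [hF1 s hsI h2]
      · set s' := max ((s - infDist (γ s) A + infDist (γ 0) A)/2) 0 with hs'def
        have hs'0 : (0:ℝ) ≤ s' := le_max_right _ _
        have hs'lt : s' < infDist (γ 0) A - C := by
          rw [hs'def]
          apply max_lt
          · linarith
          · linarith
        have hs'I : s' ∈ Set.Icc (0:ℝ) L := ⟨hs'0, by linarith [hsI.2]⟩
        have hws : s - s' < infDist (γ s) A - C := by
          rcases le_or_gt ((s - infDist (γ s) A + infDist (γ 0) A)/2) 0 with hc0 | hc0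
          · have he : s' = 0 := by rw [hs'def]; exact max_eq_right hc0
            rw [he]
            linarith
          · have he : s' = (s - infDist (γ s) A + infDist (γ 0) A)/2 := by
              rw [hs'def]; exact max_eq_left hc0.le
            rw [he]
            linarith
        have hanch : dist (ρ (γ s')) (ρ (γ s)) ≤ C := by
          apply hρc
          rw [hγd s' hs'I s hsI, abs_of_nonpos (by linarith : s' - s ≤ 0)]
          linarith
        have hus' := hF2 s' hs'I hs'lt
        have htri := dist_triangle (ρ x₀) (ρ (γ s')) (ρ (γ s))
        linarith
  -- Main claim: projections along the geodesic stay 3C-close to ρ x₀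
  have hmain : ∀ t ∈ Set.Icc (0:ℝ) L, dist (ρ x₀) (ρ (γ t)) ≤ 3*C := by
    by_contra hbad
    push_neg at hbad
    obtain ⟨t₀, ht₀I, ht₀⟩ := hbad
    set B := {t : ℝ | t ∈ Set.Icc (0:ℝ) L ∧ 3*C < dist (ρ x₀) (ρ (γ t))} with hBdef
    have hBne : B.Nonempty := ⟨t₀, ht₀I, ht₀⟩
    have hBbb : BddBelow B := ⟨0, fun x hx => hx.1.1⟩
    set T := sInf B with hTdef
    have hTle : ∀ b ∈ B, T ≤ b := fun b hb => csInf_le hBbb hb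
    have hT0 : 0 ≤ T := le_csInf hBne fun b hb => hb.1.1
    have hTL : T ≤ L := le_trans (hTle t₀ ⟨ht₀I, ht₀⟩) ht₀I.2
    have hbelow : ∀ s ∈ Set.Icc (0:ℝ) L, s < T → dist (ρ x₀) (ρ (γ s)) ≤ 3*C := by
      intro s hsI hsT
      by_contra hh
      push_neg at hh
      exact absurd (hTle s ⟨hsI, hh⟩) (not_le.2 hsT)
    have hTlow : infDist (γ 0) A - C ≤ T := by
      apply le_csInf hBne
      intro b hb
      by_contra hh
      push_neg at hh
      have h := hF2 b hb.1 hh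
      linarith [hb.2]
    obtain ⟨b, hbB, hbT⟩ : ∃ b ∈ B, b < T + 1/2 :=
      (csInf_lt_iff hBbb hBne).1 (by linarith)
    have hbI : b ∈ Set.Icc (0:ℝ) L := hbB.1
    have hub : 3*C < dist (ρ x₀) (ρ (γ b)) := hbB.2
    have hTb : T ≤ b := hTle b hbB
    have hT2 : 12*C + 2 ≤ T := by linarith
    -- anchor at T - 1/2 to get a crude bound at b
    have hstI : T - 1/2 ∈ Set.Icc (0:ℝ) L := ⟨by linarith, by linarith⟩
    have hust : dist (ρ x₀) (ρ (γ (T - 1/2))) ≤ 3*C := hbelow _ hstI (by linarith)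
    have hfst : 10*C + 2 ≤ infDist (γ (T - 1/2)) A := by
      have h := havoid _ hstI
      linarith
    have hub4 : dist (ρ x₀) (ρ (γ b)) ≤ 4*C := by
      have hanch : dist (ρ (γ b)) (ρ (γ (T - 1/2))) ≤ C := by
        apply hρc
        rw [hγd b hbI _ hstI, abs_of_nonneg (by linarith : (0:ℝ) ≤ b - (T - 1/2))]
        linarith
      have h5 := dist_triangle (ρ x₀) (ρ (γ (T - 1/2))) (ρ (γ b))
      have h6 : dist (ρ (γ (T - 1/2))) (ρ (γ b)) = dist (ρ (γ b)) (ρ (γ (T - 1/2))) :=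
        dist_comm _ _
      linarith
    have hfb : 9*C + 2 ≤ infDist (γ b) A := by
      have h := havoid b hbI
      linarith
    have hfb2 : b - infDist (γ 0) A - 6*C ≤ infDist (γ b) A := by
      have h := hpin b hbI
      linarith
    -- the good anchor point s
    set s := max (b - infDist (γ b) A + C + 1/2) 0 with hsdef
    have hs0 : (0:ℝ) ≤ s := le_max_right _ _
    have hsge : b - infDist (γ b) A + C + 1/2 ≤ s := le_max_left _ _
    have hsT : s < T := by
      rw [hsdef]
      apply max_lt
      · linarith
      · linarith
    have hsI : s ∈ Set.Icc (0:ℝ) L := ⟨hs0, by linarith⟩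
    have hsu3 : dist (ρ x₀) (ρ (γ s)) ≤ 3*C := hbelow s hsI hsT
    have hssmall : s < infDist (γ 0) A + 8*C + 2 := by
      rw [hsdef]
      apply max_lt
      · linarith
      · linarith
    have hsu2 : dist (ρ x₀) (ρ (γ s)) ≤ 2*C := lemA s hsI hsu3 hssmall
    have hanchb : dist (ρ (γ s)) (ρ (γ b)) ≤ C := by
      apply hρc
      rw [hγd s hsI b hbI, abs_of_nonpos (by linarith : s - b ≤ 0)]
      linarith
    have h7 := dist_triangle (ρ x₀) (ρ (γ s)) (ρ (γ b))
    linarith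
  have hfin := hmain L hLI
  rw [hγ1] at hfin
  linarith

/-- Equivalence of strong contraction and strong constriction in geodesic metric
spaces, with constants depending only on `C`. -/
theorem strongly_contracting_iff_strongly_constricting (C : ℝ) (hC : 0 ≤ C) :
    (∃ C' : ℝ, ∀ (X : Type) (_ : MetricSpace X) (A : Set X) (ρ : X → X),
      (∀ x y : X, ∃ γ : ℝ → X, IsGeodesicSeg γ x y) →
      StronglyContracting C A ρ → StronglyConstricting C' A ρ) ∧
    (∃ C'' : ℝ, ∀ (X : Type) (_ : MetricSpace X) (A : Set X) (ρ : X → X),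
      (∀ x y : X, ∃ γ : ℝ → X, IsGeodesicSeg γ x y) →
      StronglyConstricting C A ρ → StronglyContracting C'' A ρ) := by
  constructor
  · -- contracting ⇒ constricting, C' := 14C + 2
    refine ⟨14*C + 2, ?_⟩
    intro Y iY A ρ hgeo hcontr
    refine ⟨hcontr.1, fun a ha => by linarith [hcontr.2.1 a ha], ?_⟩
    intro x₀ x₁ γ hγ hDgt
    refine ⟨strongly_contracting_near_first hC hcontr hγ hDgt, ?_⟩
    have hD' : 14*C + 2 < dist (ρ x₁) (ρ x₀) := by rwa [dist_comm]
    obtain ⟨t, htI, hlt⟩ := strongly_contracting_near_first hC hcontr hγ.rev hD'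
    rw [dist_comm x₁ x₀] at htI
    exact ⟨dist x₀ x₁ - t, ⟨by linarith [htI.2], by linarith [htI.1]⟩, hlt⟩
  · -- constricting ⇒ contracting, C'' := 2C
    refine ⟨2*C, ?_⟩
    intro Y iY A ρ hgeo hcons
    obtain ⟨hρA, hρa, hmain⟩ := hcons
    refine ⟨hρA, fun a ha => by linarith [hρa a ha], ?_, ?_⟩
    · -- almost closest point
      intro x
      have hAne : A.Nonempty := ⟨ρ x, hρA x⟩
      by_contra hcon
      push_neg at hcon
      have hε : (0:ℝ) < (dist x (ρ x) - infDist x A - 2*C)/2 := by linarith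
      obtain ⟨a, haA, hax⟩ := (Metric.infDist_lt_iff hAne).1
        (lt_add_of_pos_right (infDist x A) hε)
      obtain ⟨γ, hγ⟩ := hgeo x a
      obtain ⟨hγ0, hγ1, hγd⟩ := hγ
      rcases le_or_gt (dist (ρ x) (ρ a)) C with hle | hlt
      · have h1 := dist_triangle x a (ρ x)
        have h2 := dist_triangle a (ρ a) (ρ x)
        have h3 : dist (ρ a) a ≤ C := hρa a haA
        have h4 : dist a (ρ a) = dist (ρ a) a := dist_comm _ _
        have h5 : dist (ρ a) (ρ x) = dist (ρ x) (ρ a) := dist_comm _ _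
        linarith
      · obtain ⟨⟨t, htI, ht⟩, -⟩ := hmain x a γ ⟨hγ0, hγ1, hγd⟩ hlt
        have h6 : dist x (γ t) = t := by
          rw [← hγ0, hγd 0 ⟨le_rfl, dist_nonneg⟩ t htI, zero_sub, abs_neg,
            abs_of_nonneg htI.1]
        have h7 := dist_triangle x (γ t) (ρ x)
        have h8 : dist (γ t) (ρ x) = dist (ρ x) (γ t) := dist_comm _ _
        linarith [htI.2]
    · -- contraction of far balls
      intro p q hpq
      rcases le_or_gt (dist (ρ p) (ρ q)) C with hle | hlt
      · linarith
      · exfalso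
        obtain ⟨γ, hγ⟩ := hgeo p q
        obtain ⟨hγ0, hγ1, hγd⟩ := hγ
        obtain ⟨-, ⟨t, htI, ht⟩⟩ := hmain p q γ ⟨hγ0, hγ1, hγd⟩ hlt
        have h1 : infDist q A ≤ dist q (ρ q) := infDist_le_dist_of_mem (hρA q)
        have h2 := dist_triangle q (γ t) (ρ q)
        have h3 : dist q (γ t) = dist p q - t := by
          have h := hγd (dist p q) ⟨dist_nonneg, le_rfl⟩ t htI
          rw [hγ1, abs_of_nonneg (by linarith [htI.2] : (0:ℝ) ≤ dist p q - t)] at h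
          exact h
        have h4 : dist (γ t) (ρ q) = dist (ρ q) (γ t) := dist_comm _ _
        linarith [htI.1]
end
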